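/- arXiv:2105.12565 — 5 statements merged into one kernel-verified Lean document; each statement's English description precedes it below -/
import Mathlib

section
/- If G is a connected graph of order n and i is any vertex of G, then the average size of a connected vertex set of G containing i is at least (n+1)/2; that is, S(G,i) ≥ ((n+1)/2)·N(G,i), where N(G,i) is the number of connected sets containing i and S(G,i) is the sum of their sizes. -/
open Finset Filter

attribute [local instance] Classical.propDecidable

noncomputable def connSets {V : Type*} [Fintype V] (G : SimpleGraph V) : Finset (Finset V) :=
  Finset.univ.filter fun U => U.Nonempty ∧ (G.induce (U : Set V)).Connected

/-!
Fix the root `x` and write `C(R, S)` for the connected `U` with `insert x S ⊆ U ⊆ R`. For connected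
`R ∋ x` and `S ⊆ R ∖ {x}` we prove, by induction on `|R| + |R ∖ S|`, the stronger inequality
`(|R| + 1) |C(R, S)| + ∑_{u ∈ S} |C(R ∖ {u}, S ∖ {u})| ≤ 2 ∑_{U ∈ C(R, S)} |U|`;
`R = V`, `S = ∅` is the theorem.

If some `w ∈ R ∖ insert x S` is not a cut vertex of `R`, split `C(R, S)` according to whether
`w ∈ U` and use the instances `(R ∖ {w}, S)` and `(R, insert w S)`; the summand `u = w` of the
second one is exactly the missing term. Otherwise every vertex `y` outside `insert x S` is a cut
vertex; as every component of `R ∖ {y}` contains a non-cut vertex of `R`, removing `y` separates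
some vertex of `insert x S` from `x`. Hence `C(R, S) = {R}`, and each `U ∈ C(R ∖ {u}, S ∖ {u})`
has exactly one vertex `y ∈ R ∖ U` adjacent to `U`; then `U` is the component of `x` in `R ∖ {y}`
and `u` the vertex of `S` outside `U`, so the sum over `u` is at most `|R| - 1`.
-/

namespace SimpleGraph

variable {V : Type*} {G : SimpleGraph V}

def ReachIn (G : SimpleGraph V) (R : Finset V) (a b : V) : Prop :=
  ∃ p : G.Walk a b, ∀ v ∈ p.support, v ∈ R

namespace ReachIn

variable {R R' T : Finset V} {a b c : V}

theorem refl (ha : a ∈ R) : G.ReachIn R a a :=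
  ⟨.nil, by simpa⟩

theorem symm (h : G.ReachIn R a b) : G.ReachIn R b a :=
  let ⟨p, hp⟩ := h
  ⟨p.reverse, by simpa using hp⟩

theorem trans (h : G.ReachIn R a b) (h' : G.ReachIn R b c) : G.ReachIn R a c :=
  let ⟨p, hp⟩ := h
  let ⟨q, hq⟩ := h'
  ⟨p.append q, fun v hv => (Walk.mem_support_append_iff p q).1 hv |>.elim (hp v) (hq v)⟩

theorem mono (hR : R ⊆ R') (h : G.ReachIn R a b) : G.ReachIn R' a b :=
  let ⟨p, hp⟩ := h
  ⟨p, fun v hv => hR (hp v hv)⟩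

theorem left_mem (h : G.ReachIn R a b) : a ∈ R :=
  let ⟨p, hp⟩ := h
  hp a p.start_mem_support

theorem cons (hab : G.Adj a b) (ha : a ∈ R) (h : G.ReachIn R b c) : G.ReachIn R a c :=
  let ⟨p, hp⟩ := h
  ⟨.cons hab p, by simpa [ha] using hp⟩

theorem exists_adj_notMem (h : G.ReachIn R a b) (ha : a ∈ T) (hb : b ∉ T) :
    ∃ c t, G.ReachIn (R ∩ T) a c ∧ G.Adj c t ∧ t ∈ R ∧ t ∉ T := by
  obtain ⟨p, hp⟩ := h
  induction p with
  | nil => exact absurd ha hb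
  | @cons a a' b hadj p ih =>
    have haR : a ∈ R := hp a (by simp)
    have hp' : ∀ v ∈ p.support, v ∈ R := fun v hv => hp v (by simp [hv])
    by_cases ha' : a' ∈ T
    · obtain ⟨c, t, hc, hct, htR, htT⟩ := ih ha' hb hp'
      exact ⟨c, t, cons hadj (mem_inter.2 ⟨haR, ha⟩) hc, hct, htR, htT⟩
    · exact ⟨a, a', refl (mem_inter.2 ⟨haR, ha⟩), hadj, hp' a' p.start_mem_support, ha'⟩

theorem exists_mem_reachIn_insert (h : G.ReachIn R a b) (hb : b ∈ T) :
    ∃ t ∈ T, G.ReachIn (insert t (R \ T)) a t := by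
  by_cases ha : a ∈ T
  · exact ⟨a, ha, refl (mem_insert_self _ _)⟩
  obtain ⟨c, t, hc, hct, htR, ht⟩ := h.exists_adj_notMem (T := R \ T)
    (mem_sdiff.2 ⟨h.left_mem, ha⟩) fun h => (mem_sdiff.1 h).2 hb
  have htT : t ∈ T := by simpa [htR] using ht
  refine ⟨t, htT, (hc.mono fun v hv => mem_insert_of_mem (mem_inter.1 hv).2).trans ?_⟩
  exact cons hct (mem_insert_of_mem (mem_inter.1 hc.symm.left_mem).2) (refl (mem_insert_self _ _))

end ReachIn

variable {R U : Finset V} {a b x y : V}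

theorem Connected.reachIn (hU : (G.induce (U : Set V)).Connected) (ha : a ∈ U) (hb : b ∈ U) :
    G.ReachIn U a b := by
  obtain ⟨p⟩ := hU.preconnected ⟨a, ha⟩ ⟨b, hb⟩
  refine ⟨p.map (Embedding.induce (U : Set V)).toHom, fun v hv => ?_⟩
  obtain ⟨⟨v, hvU⟩, -, rfl⟩ := List.mem_map.1 ((Walk.support_map _ _).symm ▸ hv :)
  exact hvU

theorem connected_induce_of_reachIn (hy : y ∈ U) (h : ∀ v ∈ U, G.ReachIn U v y) :
    (G.induce (U : Set V)).Connected := by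
  rw [connected_iff_exists_forall_reachable]
  refine ⟨⟨y, hy⟩, fun ⟨v, hv⟩ => ?_⟩
  obtain ⟨p, hp⟩ := (h v hv).symm
  exact ⟨p.induce _ hp⟩

noncomputable def distIn (G : SimpleGraph V) (R : Finset V) (a b : V) : ℕ :=
  sInf {n | ∃ p : G.Walk a b, p.IsPath ∧ (∀ v ∈ p.support, v ∈ R) ∧ p.length = n}

theorem distIn_le {p : G.Walk a b} (hp : p.IsPath) (hpR : ∀ v ∈ p.support, v ∈ R) :
    G.distIn R a b ≤ p.length :=
  Nat.sInf_le ⟨p, hp, hpR, rfl⟩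

theorem ReachIn.exists_isPath_length_eq_distIn (h : G.ReachIn R a b) :
    ∃ p : G.Walk a b, p.IsPath ∧ (∀ v ∈ p.support, v ∈ R) ∧ p.length = G.distIn R a b := by
  obtain ⟨p, hp⟩ := h
  exact Nat.sInf_mem
    (s := {n | ∃ p : G.Walk a b, p.IsPath ∧ (∀ v ∈ p.support, v ∈ R) ∧ p.length = n})
    ⟨_, p.bypass, p.bypass_isPath, fun v hv => hp v (p.support_bypass_subset_support hv), rfl⟩

theorem Connected.exists_connected_induce_erase (hR : (G.induce (R : Set V)).Connected)
    (hy : y ∈ R) {z : V} (hz : z ∈ R.erase y) :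
    ∃ w, G.ReachIn (R.erase y) z w ∧ (G.induce (R.erase w : Set V)).Connected := by
  set K := (R.erase y).filter (G.ReachIn (R.erase y) z)
  -- `w ∈ K` farthest from `y`
  obtain ⟨w, hwK, hmax⟩ := K.exists_max_image (G.distIn R · y) ⟨z, mem_filter.2 ⟨hz, .refl hz⟩⟩
  obtain ⟨hwy, hwR⟩ := mem_erase.1 (mem_filter.1 hwK).1
  have hzw := (mem_filter.1 hwK).2
  refine ⟨w, hzw, connected_induce_of_reachIn (mem_erase.2 ⟨Ne.symm hwy, hy⟩) fun v hv => ?_⟩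
  obtain ⟨hvw, hvR⟩ := mem_erase.1 hv
  obtain ⟨q, hq, hqR, hqlen⟩ := (hR.reachIn hvR hy).exists_isPath_length_eq_distIn
  by_cases hwq : w ∈ q.support
  · exfalso
    have hvw' : G.ReachIn (R.erase y) v w :=
      ⟨q.takeUntil w hwq, fun u hu => mem_erase.2
        ⟨fun h => Walk.endpoint_notMem_support_takeUntil hq hwq hwy.symm (h ▸ hu),
          hqR u (q.support_takeUntil_subset_support hwq hu)⟩⟩
    have hvK : v ∈ K := mem_filter.2 ⟨hvw'.left_mem, hzw.trans hvw'.symm⟩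
    have hdrop := distIn_le (hq.dropUntil hwq)
      (fun u hu => hqR u (q.support_dropUntil_subset_support hwq hu))
    have := Walk.length_dropUntil_lt_length hwq hvw.symm
    have := hmax v hvK
    omega
  · exact ⟨q, fun u hu => mem_erase.2 ⟨fun h => hwq (h ▸ hu), hqR u hu⟩⟩

theorem Connected.reachIn_of_adj (hU : (G.induce (U : Set V)).Connected) (hUR : U ⊆ R)
    (hx : x ∈ U) {z : V} (hz : z ∈ U) (ha : a ∈ R) (haz : G.Adj a z) : G.ReachIn R a x :=
  .cons haz ha ((hU.reachIn hz hx).mono hUR)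

noncomputable def vertexBoundary (G : SimpleGraph V) (R U : Finset V) : Finset V :=
  (R \ U).filter fun y => ∃ z ∈ U, G.Adj y z

theorem mem_vertexBoundary :
    y ∈ G.vertexBoundary R U ↔ y ∈ R ∧ y ∉ U ∧ ∃ z ∈ U, G.Adj y z := by
  simp [vertexBoundary, and_assoc]

theorem ReachIn.vertexBoundary_nonempty {u : V} (h : G.ReachIn R x u) (hx : x ∈ U) (hu : u ∉ U) :
    (G.vertexBoundary R U).Nonempty := by
  obtain ⟨c, t, hc, hct, htR, htU⟩ := h.exists_adj_notMem hx hu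
  exact ⟨t, mem_vertexBoundary.2 ⟨htR, htU, c, (mem_inter.1 hc.symm.left_mem).2, hct.symm⟩⟩

theorem eq_filter_reachIn_of_vertexBoundary_subsingleton
    (hU : (G.induce (U : Set V)).Connected) (hx : x ∈ U) (hUR : U ⊆ R)
    (hy : y ∈ G.vertexBoundary R U) (hsub : (G.vertexBoundary R U : Set V).Subsingleton) :
    U = (R.erase y).filter (G.ReachIn (R.erase y) x) := by
  have hyU := (mem_vertexBoundary.1 hy).2.1
  have hUy : U ⊆ R.erase y := subset_erase.2 ⟨hUR, hyU⟩
  ext v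
  refine ⟨fun hv => mem_filter.2 ⟨hUy hv, (hU.reachIn hx hv).mono hUy⟩, fun hv => ?_⟩
  obtain ⟨hvR, hxv⟩ := mem_filter.1 hv
  by_contra hvU
  obtain ⟨c, t, hc, hct, htR, htU⟩ := hxv.exists_adj_notMem hx hvU
  have htb : t ∈ G.vertexBoundary R U := mem_vertexBoundary.2
    ⟨(mem_erase.1 htR).2, htU, c, (mem_inter.1 hc.symm.left_mem).2, hct.symm⟩
  exact (mem_erase.1 htR).1 (hsub htb hy)

noncomputable def connSetsIn (G : SimpleGraph V) (x : V) (R S : Finset V) : Finset (Finset V) :=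
  R.powerset.filter fun U => (G.induce (U : Set V)).Connected ∧ insert x S ⊆ U

theorem mem_connSetsIn {S : Finset V} : U ∈ G.connSetsIn x R S ↔
    U ⊆ R ∧ (G.induce (U : Set V)).Connected ∧ insert x S ⊆ U := by
  simp [connSetsIn]

theorem sum_connSetsIn_eq_add {M : Type*} [AddCommMonoid M] (f : Finset V → M) (S : Finset V)
    (w : V) : ∑ U ∈ G.connSetsIn x R S, f U =
      ∑ U ∈ G.connSetsIn x (R.erase w) S, f U + ∑ U ∈ G.connSetsIn x R (insert w S), f U := by
  have hout : (G.connSetsIn x R S).filter (w ∉ ·) = G.connSetsIn x (R.erase w) S := by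
    ext U
    simp only [mem_filter, mem_connSetsIn, subset_erase]
    tauto
  have hin : (G.connSetsIn x R S).filter (w ∈ ·) = G.connSetsIn x R (insert w S) := by
    ext U
    simp only [mem_filter, mem_connSetsIn, insert_subset_iff]
    tauto
  rw [← hout, ← hin, add_comm, sum_filter_add_sum_filter_not]

theorem card_connSetsIn_eq_add (S : Finset V) (w : V) :
    #(G.connSetsIn x R S) =
      #(G.connSetsIn x (R.erase w) S) + #(G.connSetsIn x R (insert w S)) := by
  simp only [card_eq_sum_ones]
  exact G.sum_connSetsIn_eq_add _ S w

def NoRemovableOutside (G : SimpleGraph V) (R T : Finset V) : Prop :=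
  ∀ w ∈ R \ T, ¬(G.induce (R.erase w : Set V)).Connected

namespace NoRemovableOutside

variable {S T : Finset V}

theorem not_forall_reachIn (h : G.NoRemovableOutside R T)
    (hR : (G.induce (R : Set V)).Connected) (hxT : x ∈ T) (hy : y ∈ R \ T) :
    ¬∀ t ∈ T, G.ReachIn (R.erase y) t x := by
  intro hT
  refine h y hy (connected_induce_of_reachIn (hT x hxT).left_mem fun z hz => ?_)
  obtain ⟨w, hzw, hw⟩ := hR.exists_connected_induce_erase (mem_sdiff.1 hy).1 hz
  have hwT : w ∈ T := by
    by_contra hwT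
    exact h w (mem_sdiff.2 ⟨(mem_erase.1 hzw.symm.left_mem).2, hwT⟩) hw
  exact hzw.trans (hT w hwT)

theorem vertexBoundary_subsingleton (h : G.NoRemovableOutside R (insert x S))
    (hR : (G.induce (R : Set V)).Connected) {u : V} (hu : u ∈ R)
    (hU : (G.induce (U : Set V)).Connected) (hxU : x ∈ U) (hUR : U ⊆ R.erase u)
    (hSU : S.erase u ⊆ U) : (G.vertexBoundary R U : Set V).Subsingleton := by
  have hUR' : U ⊆ R := hUR.trans (erase_subset _ _)
  -- if `u` did, every vertex of `insert x S` would reach `x` in `R ∖ {y}`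
  have hsep : ∀ y ∈ R, y ∉ U → ¬G.ReachIn (R.erase y) u x := by
    intro y hyR hyU hux
    have hUy : U ⊆ R.erase y := subset_erase.2 ⟨hUR', hyU⟩
    have huy : u ≠ y := (mem_erase.1 hux.left_mem).1
    have hyS : y ∉ insert x S := by
      rw [mem_insert]
      rintro (rfl | hyS)
      · exact hyU hxU
      · exact hyU (hSU (mem_erase.2 ⟨huy.symm, hyS⟩))
    refine h.not_forall_reachIn hR (mem_insert_self x S) (mem_sdiff.2 ⟨hyR, hyS⟩) fun t ht => ?_
    by_cases htu : t = u
    · exact htu ▸ hux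
    have htU : t ∈ U := by
      rcases mem_insert.1 ht with rfl | htS
      · exact hxU
      · exact hSU (mem_erase.2 ⟨htu, htS⟩)
    exact (hU.reachIn htU hxU).mono hUy
  intro y₁ hy₁ y₂ hy₂
  by_contra hne
  set T := insert y₁ (insert y₂ U)
  have hto : ∀ t ∈ T, ∀ y ∈ G.vertexBoundary R U, t ≠ y → G.ReachIn (R.erase y) t x := by
    intro t ht y hy hty
    have hUy : U ⊆ R.erase y := subset_erase.2 ⟨hUR', (mem_vertexBoundary.1 hy).2.1⟩
    by_cases htU : t ∈ U
    · exact (hU.reachIn htU hxU).mono hUy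
    have htb : t ∈ G.vertexBoundary R U := by
      rcases mem_insert.1 ht with rfl | ht
      · exact hy₁
      rcases mem_insert.1 ht with rfl | ht
      · exact hy₂
      · exact absurd ht htU
    obtain ⟨htR, -, z, hz, htz⟩ := mem_vertexBoundary.1 htb
    exact hU.reachIn_of_adj hUy hxU hz (mem_erase.2 ⟨hty, htR⟩) htz
  -- the first vertex of `T` on a walk from `u` to `x` is reached avoiding `y₁` or `y₂`
  obtain ⟨t, ht, hut⟩ :=
    (hR.reachIn hu (hUR' hxU)).exists_mem_reachIn_insert (T := T) (by simp [T, hxU])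
  obtain ⟨y, hy, hyT, hty⟩ : ∃ y ∈ G.vertexBoundary R U, y ∈ T ∧ t ≠ y := by
    by_cases h₁ : t = y₁
    · exact ⟨y₂, hy₂, by simp [T], h₁ ▸ hne⟩
    · exact ⟨y₁, hy₁, mem_insert_self _ _, h₁⟩
  have htx := hto t ht y hy hty
  have hsub : insert t (R \ T) ⊆ R.erase y := by
    intro v hv
    rcases mem_insert.1 hv with rfl | hv
    · exact htx.left_mem
    · exact mem_erase.2 ⟨fun h => (mem_sdiff.1 hv).2 (h ▸ hyT), (mem_sdiff.1 hv).1⟩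
  obtain ⟨hyR, hyU, -⟩ := mem_vertexBoundary.1 hy
  exact hsep y hyR hyU ((hut.mono hsub).trans htx)

theorem connSetsIn_eq_singleton (h : G.NoRemovableOutside R (insert x S))
    (hR : (G.induce (R : Set V)).Connected) (hxS : insert x S ⊆ R) : G.connSetsIn x R S = {R} := by
  ext U
  rw [mem_connSetsIn, mem_singleton]
  refine ⟨fun ⟨hUR, hU, hxSU⟩ => ?_, by rintro rfl; exact ⟨subset_rfl, hR, hxS⟩⟩
  by_contra hne
  obtain ⟨y, hyR, hyU⟩ := not_subset.1 fun h => hne (hUR.antisymm h)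
  have hxU := hxSU (mem_insert_self x S)
  exact h.not_forall_reachIn hR (mem_insert_self x S) (mem_sdiff.2 ⟨hyR, fun h => hyU (hxSU h)⟩)
    fun t ht => (hU.reachIn (hxSU ht) hxU).mono (subset_erase.2 ⟨hUR, hyU⟩)

theorem sum_card_connSetsIn_erase_le (h : G.NoRemovableOutside R (insert x S))
    (hR : (G.induce (R : Set V)).Connected) (hS : S ⊆ R) :
    ∑ u ∈ S, #(G.connSetsIn x (R.erase u) (S.erase u)) ≤ #(R.erase x) := by
  have hmem : ∀ u ∈ S, ∀ U ∈ G.connSetsIn x (R.erase u) (S.erase u),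
      U ⊆ R.erase u ∧ (G.induce (U : Set V)).Connected ∧ x ∈ U ∧ S.erase u ⊆ U := by
    intro u _ U hU
    obtain ⟨hUR, hUc, hxSU⟩ := mem_connSetsIn.1 hU
    exact ⟨hUR, hUc, insert_subset_iff.1 hxSU⟩
  rw [← card_sigma]
  refine card_le_card_of_forall_subsingleton (fun p y => y ∈ G.vertexBoundary R p.2) ?_ ?_
  · rintro ⟨u, U⟩ hp
    obtain ⟨huS, hU⟩ := mem_sigma.1 hp
    obtain ⟨hUR, -, hxU, -⟩ := hmem u huS U hU
    have huU : u ∉ U := fun h => (mem_erase.1 (hUR h)).1 rfl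
    obtain ⟨y, hy⟩ := (hR.reachIn ((mem_erase.1 (hUR hxU)).2) (hS huS)).vertexBoundary_nonempty
      hxU huU
    obtain ⟨hyR, hyU, -⟩ := mem_vertexBoundary.1 hy
    exact ⟨y, mem_erase.2 ⟨fun h => hyU (h ▸ hxU), hyR⟩, hy⟩
  · have hcomp : ∀ u ∈ S, ∀ U ∈ G.connSetsIn x (R.erase u) (S.erase u),
        ∀ y ∈ G.vertexBoundary R U, U = (R.erase y).filter (G.ReachIn (R.erase y) x) := by
      intro u huS U hU y hy
      obtain ⟨hUR, hUc, hxU, hSU⟩ := hmem u huS U hU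
      exact eq_filter_reachIn_of_vertexBoundary_subsingleton hUc hxU (hUR.trans (erase_subset _ _))
        hy (h.vertexBoundary_subsingleton hR (hS huS) hUc hxU hUR hSU)
    rintro y - ⟨u, U⟩ ⟨hp, hyU⟩ ⟨u', U'⟩ ⟨hq, hyU'⟩
    obtain ⟨huS, hU⟩ := mem_sigma.1 hp
    obtain ⟨hu'S, hU'⟩ := mem_sigma.1 hq
    have hUU' : U = U' := (hcomp u huS U hU y hyU).trans (hcomp u' hu'S U' hU' y hyU').symm
    subst hUU'
    obtain ⟨-, -, -, hSU⟩ := hmem u huS U hU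
    obtain ⟨hU'R, -, -, -⟩ := hmem u' hu'S U hU'
    by_contra hne
    have hu'u : u' ≠ u := fun h => hne (by rw [h])
    exact (mem_erase.1 (hU'R (hSU (mem_erase.2 ⟨hu'u, hu'S⟩)))).1 rfl

end NoRemovableOutside

theorem le_two_mul_sum_card_connSetsIn {R S : Finset V} {x : V}
    (hR : (G.induce (R : Set V)).Connected) (hx : x ∈ R) (hS : S ⊆ R.erase x) :
    (#R + 1) * #(G.connSetsIn x R S) + ∑ u ∈ S, #(G.connSetsIn x (R.erase u) (S.erase u)) ≤
      2 * ∑ U ∈ G.connSetsIn x R S, #U := by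
  have hxS : insert x S ⊆ R := insert_subset hx (hS.trans (erase_subset _ _))
  by_cases hcut : G.NoRemovableOutside R (insert x S)
  · rw [hcut.connSetsIn_eq_singleton hR hxS, sum_singleton, card_singleton]
    have := hcut.sum_card_connSetsIn_erase_le hR (hS.trans (erase_subset _ _))
    have := card_erase_add_one hx
    omega
  obtain ⟨w, hwR, hwx, hwS, hRw⟩ :
      ∃ w ∈ R, w ≠ x ∧ w ∉ S ∧ (G.induce (R.erase w : Set V)).Connected := by
    simpa [NoRemovableOutside] using hcut
  have IH₁ := le_two_mul_sum_card_connSetsIn hRw (mem_erase.2 ⟨hwx.symm, hx⟩) fun v hv => by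
    obtain ⟨hvx, hvR⟩ := mem_erase.1 (hS hv)
    exact mem_erase.2 ⟨hvx, mem_erase.2 ⟨ne_of_mem_of_not_mem hv hwS, hvR⟩⟩
  have IH₂ := le_two_mul_sum_card_connSetsIn hR hx (insert_subset (mem_erase.2 ⟨hwx, hwR⟩) hS)
  rw [sum_insert hwS, erase_insert hwS] at IH₂
  have hsplit : ∀ u ∈ S, #(G.connSetsIn x (R.erase u) (S.erase u)) =
      #(G.connSetsIn x ((R.erase w).erase u) (S.erase u)) +
        #(G.connSetsIn x (R.erase u) ((insert w S).erase u)) := by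
    intro u hu
    rw [erase_insert_of_ne (ne_of_mem_of_not_mem hu hwS).symm, erase_right_comm]
    exact G.card_connSetsIn_eq_add (S.erase u) w
  rw [sum_congr rfl hsplit, sum_add_distrib, G.sum_connSetsIn_eq_add _ S w,
    G.card_connSetsIn_eq_add S w]
  rw [← card_erase_add_one hwR] at IH₂ ⊢
  nlinarith
termination_by #R + #(R \ S)
decreasing_by
  · have := card_erase_lt_of_mem hwR
    have := card_erase_lt_of_mem (mem_sdiff.2 ⟨hwR, hwS⟩)
    rw [erase_sdiff_comm]
    omega
  · have := card_erase_lt_of_mem (mem_sdiff.2 ⟨hwR, hwS⟩)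
    rw [sdiff_insert]
    omega

end SimpleGraph

theorem stmt_1 {V : Type*} [Fintype V] (G : SimpleGraph V) (hG : G.Connected) (i : V) :
    (∑ U ∈ (connSets G).filter (fun U => i ∈ U), (U.card : ℝ)) ≥
      ((Fintype.card V + 1) / 2) * ((connSets G).filter (fun U => i ∈ U)).card := by
  have hconn : (G.induce ((univ : Finset V) : Set V)).Connected :=
    SimpleGraph.connected_induce_of_reachIn (mem_univ i) fun v _ =>
      let ⟨p⟩ := hG.preconnected v i
      ⟨p, fun _ _ => mem_univ _⟩
  have hsets : (connSets G).filter (i ∈ ·) = G.connSetsIn i univ ∅ := by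
    ext U
    simp only [connSets, mem_filter, mem_univ, true_and, SimpleGraph.mem_connSetsIn, subset_univ,
      insert_empty, singleton_subset_iff]
    exact ⟨fun ⟨⟨_, hU⟩, hi⟩ => ⟨hU, hi⟩, fun ⟨hU, hi⟩ => ⟨⟨⟨i, hi⟩, hU⟩, hi⟩⟩
  have key := G.le_two_mul_sum_card_connSetsIn hconn (mem_univ i) (empty_subset _)
  rw [sum_empty, add_zero, card_univ] at key
  rw [hsets, ge_iff_le]
  have := (Nat.cast_le (α := ℝ)).2 key
  push_cast at this
  linarith
end

section
/- For any connected graph G of order n, the sum over all nonempty connected vertex sets U of |U|^2 is at least ((n+1)/2) times the sum over all nonempty connected vertex sets of |U|. That is, Σ_{U∈𝒞} |U|² ≥ ((n+1)/2)·S(G). -/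
open Finset Filter

attribute [local instance] Classical.propDecidable

theorem stmt_2 {V : Type*} [Fintype V] (G : SimpleGraph V) (hG : G.Connected)
    (hloc : ∀ i : V,
      (∑ U ∈ (connSets G).filter (fun U => i ∈ U), (U.card : ℝ)) ≥
        ((Fintype.card V + 1) / 2) * ((connSets G).filter (fun U => i ∈ U)).card) :
    (∑ U ∈ connSets G, (U.card : ℝ) ^ 2) ≥
      ((Fintype.card V + 1) / 2) * ∑ U ∈ connSets G, (U.card : ℝ) := by
  have key : ∀ f : Finset V → ℝ,
      ∑ i : V, ∑ U ∈ (connSets G).filter (fun U => i ∈ U), f U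
        = ∑ U ∈ connSets G, (U.card : ℝ) * f U := by
    intro f
    simp_rw [sum_filter]
    rw [Finset.sum_comm]
    refine Finset.sum_congr rfl fun U _ => ?_
    rw [Finset.sum_ite_mem, Finset.univ_inter, Finset.sum_const, nsmul_eq_mul]
  have h1 := key (fun U => (U.card : ℝ))
  have h2 := key (fun U => 1)
  simp only [mul_one] at h2
  have : ∑ i : V, ((Fintype.card V + 1) / 2 : ℝ) * ((connSets G).filter (fun U => i ∈ U)).card
      ≤ ∑ i : V, ∑ U ∈ (connSets G).filter (fun U => i ∈ U), (U.card : ℝ) :=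
    Finset.sum_le_sum fun i _ => hloc i
  rw [h1] at this
  calc ((Fintype.card V + 1) / 2 : ℝ) * ∑ U ∈ connSets G, (U.card : ℝ)
      = ∑ i : V, ((Fintype.card V + 1) / 2 : ℝ) * ((connSets G).filter (fun U => i ∈ U)).card := by
        rw [← Finset.mul_sum]
        congr 1
        rw [← h2]
        simp [Finset.sum_boole, sum_filter]
    _ ≤ ∑ U ∈ connSets G, (U.card : ℝ) * (U.card : ℝ) := this
    _ = ∑ U ∈ connSets G, (U.card : ℝ) ^ 2 := by simp [sq]
end

section
/- Let G be a connected graph of order n and let 𝒞' be the set of nonempty connected vertex sets U with U ≠ V. Then Σ_{U∈𝒞'} |U|(n − |U|) = Σ_{i∈V} S(G_i), where G_i is the induced subgraph on V \ {i} and S(G_i) is the sum of sizes of nonempty connected sets of G_i. -/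
open Finset Filter

attribute [local instance] Classical.propDecidable

def KConnected {V : Type*} [Fintype V] (k : ℕ) (G : SimpleGraph V) : Prop :=
  k < Fintype.card V ∧
    ∀ S : Finset V, S.card < k → (G.induce ((Sᶜ : Finset V) : Set V)).Connected

noncomputable def induceInduceIso {V : Type*} (G : SimpleGraph V) (s : Set V) (t : Set s) :
    (G.induce s).induce t ≃g G.induce (Subtype.val '' t) where
  toEquiv := Equiv.Set.image Subtype.val t Subtype.val_injective
  map_rel_iff' := by intro a b; simp [Equiv.Set.image, Equiv.Set.imageOfInjOn]

lemma conn_induce_iff {V : Type*} (G : SimpleGraph V) (s : Set V) (t : Set s) :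
    ((G.induce s).induce t).Connected ↔ (G.induce (Subtype.val '' t)).Connected :=
  (induceInduceIso G s t).connected_iff

lemma per_vertex {V : Type*} [Fintype V] (G : SimpleGraph V) (i : V) :
    (∑ U ∈ (connSets G).filter (fun U => i ∉ U), U.card) =
      ∑ U ∈ connSets (G.induce (({i}ᶜ : Finset V) : Set V)), U.card := by
  classical
  set s : Set V := (({i}ᶜ : Finset V) : Set V) with hs
  have hmem_s : ∀ x : V, x ∈ s ↔ x ≠ i := by
    intro x; simp [hs]
  refine Finset.sum_nbij'
    (i := fun U => Finset.preimage U (Subtype.val : s → V) Subtype.val_injective.injOn)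
    (j := fun U => U.image (Subtype.val : s → V))
    ?_ ?_ ?_ ?_ ?_
  · intro U hU
    simp only [Finset.mem_filter, connSets, Finset.mem_univ, true_and] at hU ⊢
    obtain ⟨⟨hne, hconn⟩, hi⟩ := hU
    have himg : (Subtype.val : s → V) ''
        ((Finset.preimage U (Subtype.val : s → V) Subtype.val_injective.injOn : Finset s) : Set s)
        = (U : Set V) := by
      rw [Finset.coe_preimage, Set.image_preimage_eq_inter_range, Subtype.range_val,
        Set.inter_eq_left]
      intro x hx
      exact (hmem_s x).mpr (by rintro rfl; exact hi hx)
    constructor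
    · obtain ⟨x, hx⟩ := hne
      exact ⟨⟨x, (hmem_s x).mpr (by rintro rfl; exact hi hx)⟩, by simp [Finset.mem_preimage, hx]⟩
    · rw [conn_induce_iff, himg]; exact hconn
  · intro U hU
    simp only [Finset.mem_filter, connSets, Finset.mem_univ, true_and] at hU ⊢
    obtain ⟨hne, hconn⟩ := hU
    have himg : ((U.image (Subtype.val : s → V) : Finset V) : Set V)
        = (Subtype.val : s → V) '' (U : Set s) := Finset.coe_image
    refine ⟨⟨hne.image _, ?_⟩, ?_⟩
    · rw [himg, ← conn_induce_iff]; exact hconn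
    · intro hmem
      obtain ⟨⟨x, hx⟩, _, hval⟩ := Finset.mem_image.mp hmem
      exact ((hmem_s x).mp hx) hval
  · intro U hU
    simp only [Finset.mem_filter] at hU
    ext x
    simp only [Finset.mem_image, Finset.mem_preimage]
    constructor
    · rintro ⟨y, hy, rfl⟩; exact hy
    · intro hx
      exact ⟨⟨x, (hmem_s x).mpr (by rintro rfl; exact hU.2 hx)⟩, hx, rfl⟩
  · intro U _
    ext x
    simp only [Finset.mem_preimage, Finset.mem_image]
    constructor
    · rintro ⟨y, hy, h⟩; rwa [Subtype.val_injective h] at hy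
    · intro hx; exact ⟨x, hx, rfl⟩
  · intro U hU
    simp only [Finset.mem_filter] at hU
    rw [← Finset.card_image_of_injective
      (Finset.preimage U (Subtype.val : s → V) Subtype.val_injective.injOn)
      (Subtype.val_injective : Function.Injective (Subtype.val : s → V))]
    congr 1
    ext x
    simp only [Finset.mem_image, Finset.mem_preimage]
    constructor
    · intro hx
      exact ⟨⟨x, (hmem_s x).mpr (by rintro rfl; exact hU.2 hx)⟩, hx, rfl⟩
    · rintro ⟨y, hy, rfl⟩; exact hy

theorem stmt_8 {V : Type*} [Fintype V] (G : SimpleGraph V) (hG : G.Connected) :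
    (∑ U ∈ (connSets G).erase Finset.univ, U.card * (Fintype.card V - U.card)) =
      ∑ i : V, ∑ U ∈ connSets (G.induce (({i}ᶜ : Finset V) : Set V)), U.card := by
  classical
  have step1 : ∀ U ∈ (connSets G).erase Finset.univ,
      U.card * (Fintype.card V - U.card) = ∑ i ∈ Uᶜ, U.card := by
    intro U _
    rw [Finset.sum_const, Finset.card_compl, smul_eq_mul, mul_comm]
  rw [Finset.sum_congr rfl step1]
  have step2 : ∀ U ∈ (connSets G).erase Finset.univ,
      (∑ i ∈ Uᶜ, U.card) = ∑ i : V, if i ∉ U then U.card else 0 := by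
    intro U _
    rw [← Finset.sum_filter]
    congr 1
    ext x
    simp [Finset.mem_compl]
  rw [Finset.sum_congr rfl step2, Finset.sum_comm]
  refine Finset.sum_congr rfl fun i _ => ?_
  rw [← Finset.sum_filter]
  have hfilter : ((connSets G).erase Finset.univ).filter (fun U => i ∉ U)
      = (connSets G).filter (fun U => i ∉ U) := by
    ext U
    simp only [Finset.mem_filter, Finset.mem_erase]
    constructor
    · rintro ⟨⟨_, h⟩, h2⟩; exact ⟨h, h2⟩
    · rintro ⟨h, h2⟩
      exact ⟨⟨fun hU => h2 (hU ▸ Finset.mem_univ i), h⟩, h2⟩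
  rw [hfilter]
  exact per_vertex G i
end

section
/- Let n ≥ 1 and 0 < a < 1 be real. Suppose a graph G of order n satisfies: (i) Σ_{U∈𝒞'} |U|(n−|U|) ≥ a(n−1)·Σ_{U∈𝒞'}(n−|U|), where 𝒞' is the set of nonempty proper connected sets, and (ii) Σ_{U∈𝒞} |U|² ≥ ((n+1)/2)·S(G). Then S(G)/(n·N(G)) ≥ 2a/(2a+1). -/
open Finset Filter

attribute [local instance] Classical.propDecidable

theorem stmt_11 {V : Type*} [Fintype V] (G : SimpleGraph V) (hG : G.Connected)
    (n : ℕ) (hn : n = Fintype.card V) (hn1 : 1 ≤ n) (a : ℝ) (ha0 : 0 < a) (ha1 : a < 1)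
    (h1 : (∑ U ∈ (connSets G).erase Finset.univ, (U.card : ℝ) * (n - U.card)) ≥
      a * (n - 1) * ∑ U ∈ (connSets G).erase Finset.univ, ((n : ℝ) - U.card))
    (h2 : (∑ U ∈ connSets G, (U.card : ℝ) ^ 2) ≥
      ((n + 1) / 2) * ∑ U ∈ connSets G, (U.card : ℝ)) :
    (∑ U ∈ connSets G, (U.card : ℝ)) / ((n : ℝ) * (connSets G).card) ≥
      2 * a / (2 * a + 1) := by
  have hVne : Nonempty V := by
    rw [← Fintype.card_pos_iff]; omega
  have huniv : (Finset.univ : Finset V) ∈ connSets G := by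
    simp only [connSets, Finset.mem_filter, Finset.mem_univ, true_and]
    refine ⟨Finset.univ_nonempty, ?_⟩
    rw [Finset.coe_univ]
    exact (SimpleGraph.induceUnivIso G).connected_iff.mpr hG
  -- case n = 1
  rcases eq_or_lt_of_le hn1 with hne | hn2
  · have hC : connSets G = {Finset.univ} := by
      apply Finset.eq_singleton_iff_unique_mem.mpr
      refine ⟨huniv, fun U hU => ?_⟩
      simp only [connSets, Finset.mem_filter, Finset.mem_univ, true_and] at hU
      have h1' : 1 ≤ U.card := Finset.card_pos.mpr hU.1
      have h2' : U.card ≤ Fintype.card V := Finset.card_le_univ U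
      exact Finset.card_eq_iff_eq_univ U |>.mp (by omega)
    have hcard : (Finset.univ : Finset V).card = 1 := by rw [Finset.card_univ]; omega
    rw [hC]
    simp [hcard, ← hne]
    rw [div_le_one (by positivity)]
    linarith
  -- n ≥ 2
  set C := connSets G with hC
  set A : ℝ := ∑ U ∈ C.erase Finset.univ, (U.card : ℝ) with hA
  set B : ℝ := ∑ U ∈ C.erase Finset.univ, (U.card : ℝ) ^ 2 with hB
  have hNpos : 0 < C.card := Finset.card_pos.mpr ⟨_, huniv⟩
  have hcardC : (C.card : ℝ) = (C.erase Finset.univ).card + 1 := by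
    rw [Finset.card_erase_of_mem huniv]
    have : 1 ≤ C.card := hNpos
    push_cast [Nat.cast_sub this]
    ring
  have hcardU : ((Finset.univ : Finset V).card : ℝ) = n := by
    rw [Finset.card_univ, hn]
  have hS : (∑ U ∈ C, (U.card : ℝ)) = A + n := by
    rw [← Finset.sum_erase_add C _ huniv, hcardU]
  have hSq : (∑ U ∈ C, (U.card : ℝ) ^ 2) = B + (n : ℝ) ^ 2 := by
    rw [← Finset.sum_erase_add C _ huniv, hcardU]
  have h1' : (n : ℝ) * A - B ≥ a * (n - 1) * ((n : ℝ) * ((C.card : ℝ) - 1) - A) := by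
    have e1 : (∑ U ∈ C.erase Finset.univ, (U.card : ℝ) * (n - U.card)) = (n : ℝ) * A - B := by
      rw [hA, hB, Finset.mul_sum, ← Finset.sum_sub_distrib]
      apply Finset.sum_congr rfl; intro x _; ring
    have e2 : (∑ U ∈ C.erase Finset.univ, ((n : ℝ) - U.card)) =
        (n : ℝ) * ((C.card : ℝ) - 1) - A := by
      rw [Finset.sum_sub_distrib, Finset.sum_const, nsmul_eq_mul, hcardC, hA]
      ring
    rw [e1, e2] at h1
    exact h1
  have h2' : B + (n : ℝ) ^ 2 ≥ ((n + 1) / 2) * (A + n) := by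
    rw [← hSq, ← hS]; exact h2
  have hAnn : 0 ≤ A := Finset.sum_nonneg fun x _ => by positivity
  have hnR : (2 : ℝ) ≤ n := by exact_mod_cast hn2
  have hNR : (1 : ℝ) ≤ C.card := by exact_mod_cast hNpos
  -- key inequality
  have key : (2 * a + 1) * (A + n) ≥ 2 * a * ((n : ℝ) * C.card) := by
    nlinarith [mul_pos ha0 (sub_pos.mpr (lt_of_lt_of_le one_lt_two hnR)),
      sq_nonneg ((n : ℝ) - 1)]
  rw [hS, ge_iff_le, div_le_div_iff₀ (by positivity) (by positivity)]
  nlinarith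
end

section
/- Every connected graph of order n has at least n(n+1)/2 nonempty connected vertex sets: N(G) ≥ n(n+1)/2. -/
/-!
Induct on a vertex set `S` inducing a connected graph. A finite connected graph has a vertex `v`
whose removal leaves it connected, so the connected subsets of `S` avoiding `v` are counted by
induction; growing a connected set from `v` one neighbour at a time gives connected subsets of `S`
through `v` of every size `1, …, |S|`. Hence `N(S) ≥ N(S \ {v}) + |S|`.
-/

open Finset Filter

attribute [local instance] Classical.propDecidable

namespace SimpleGraph

variable {V : Type*} {G : SimpleGraph V}

lemma connected_induce_insert {s : Set V} {u v : V} (hs : (G.induce s).Preconnected)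
    (hu : u ∈ s) (hadj : G.Adj v u) : (G.induce (insert v s)).Connected := by
  rw [Set.insert_eq]
  refine connected_induce_union ?_ hs rfl hu hadj
  rw [induce_singleton_eq_top]
  exact preconnected_top

lemma exists_connected_induce_card {S : Finset V} (hS : (G.induce (S : Set V)).Connected)
    {v : V} (hv : v ∈ S) {k : ℕ} (hk : 1 ≤ k) (hkS : k ≤ #S) :
    ∃ U ⊆ S, v ∈ U ∧ #U = k ∧ (G.induce (U : Set V)).Connected := by
  induction k, hk using Nat.le_induction with
  | base =>
    refine ⟨{v}, singleton_subset_iff.2 hv, mem_singleton_self v, card_singleton v, ?_⟩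
    rw [coe_singleton, induce_singleton_eq_top]
    exact connected_top
  | succ k _ ih =>
    obtain ⟨U, hUS, hvU, hUk, hU⟩ := ih (by omega)
    obtain ⟨w, hwS, hwU⟩ := exists_of_ssubset (ssubset_of_subset_of_ne hUS (by rintro rfl; omega))
    obtain ⟨p⟩ := hS.preconnected ⟨v, hv⟩ ⟨w, hwS⟩
    obtain ⟨d, -, hdU, hdU'⟩ := p.exists_boundary_dart {x | x.1 ∈ U} hvU hwU
    refine ⟨insert d.snd.1 U, insert_subset d.snd.2 hUS, mem_insert_of_mem hvU,
      by rw [card_insert_of_notMem hdU', hUk], ?_⟩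
    rw [coe_insert]
    exact connected_induce_insert hU.preconnected hdU d.adj.symm

lemma exists_preconnected_induce_erase {S : Finset V}
    (hS : (G.induce (S : Set V)).Connected) :
    ∃ v ∈ S, (G.induce (S.erase v : Set V)).Preconnected := by
  obtain ⟨v, hv⟩ := hS.exists_preconnected_induce_compl_singleton_of_finite
  let f : (G.induce (S : Set V)).induce {v}ᶜ ↪g G :=
    (Embedding.induce (S : Set V)).comp (Embedding.induce {v}ᶜ)
  have hrange : Set.range f = (S.erase v : Set V) := by
    ext x
    simp only [Set.mem_range, coe_erase, Set.mem_sdiff, mem_coe, Set.mem_singleton_iff]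
    constructor
    · rintro ⟨⟨⟨y, hyS⟩, hyv⟩, rfl⟩
      exact ⟨hyS, fun h => hyv (Subtype.ext h)⟩
    · rintro ⟨hxS, hxv⟩
      exact ⟨⟨⟨x, hxS⟩, fun h => hxv (congrArg Subtype.val h)⟩, rfl⟩
  refine ⟨v, v.2, ?_⟩
  rw [← hrange]
  exact f.isoInduceRange.preconnected_iff.mp hv

variable [Fintype V]

lemma mem_connSets {U : Finset V} :
    U ∈ connSets G ↔ U.Nonempty ∧ (G.induce (U : Set V)).Connected := by
  simp [connSets]

lemma card_le_card_connSets_mem_subset {S : Finset V} (hS : (G.induce (S : Set V)).Connected)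
    {v : V} (hv : v ∈ S) : #S ≤ #{U ∈ connSets G | v ∈ U ∧ U ⊆ S} := by
  have hsurj : Set.SurjOn card
      (({U ∈ connSets G | v ∈ U ∧ U ⊆ S} : Finset (Finset V)) : Set (Finset V)) (Icc 1 #S) := by
    intro k hk
    rw [coe_Icc, Set.mem_Icc] at hk
    obtain ⟨U, hUS, hvU, rfl, hU⟩ := exists_connected_induce_card hS hv hk.1 hk.2
    exact ⟨U, mem_coe.2 (mem_filter.2 ⟨mem_connSets.2 ⟨⟨v, hvU⟩, hU⟩, hvU, hUS⟩), rfl⟩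
  simpa using card_le_card_of_surjOn card hsurj

lemma card_mul_succ_le_two_mul_card_connSets_subset (S : Finset V)
    (hS : (G.induce (S : Set V)).Preconnected) :
    #S * (#S + 1) ≤ 2 * #{U ∈ connSets G | U ⊆ S} := by
  induction S using Finset.strongInduction with
  | H S ih =>
  rcases S.eq_empty_or_nonempty with rfl | hne
  · simp
  have hconn : (G.induce (S : Set V)).Connected := (connected_iff _).2 ⟨hS, hne.coe_sort⟩
  obtain ⟨v, hv, hpre⟩ := exists_preconnected_induce_erase hconn
  have hrest := ih _ (erase_ssubset hv) hpre
  have hthrough := card_le_card_connSets_mem_subset hconn hv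
  have hsplit : #{U ∈ connSets G | U ⊆ S.erase v} + #{U ∈ connSets G | v ∈ U ∧ U ⊆ S}
      ≤ #{U ∈ connSets G | U ⊆ S} := by
    rw [← card_union_of_disjoint]
    · refine card_le_card fun U => ?_
      simp only [mem_union, mem_filter, subset_erase]
      tauto
    · exact disjoint_filter.2 fun U _ h₁ h₂ => (subset_erase.1 h₁).2 h₂.1
  rw [← card_erase_add_one hv] at hthrough ⊢
  nlinarith

end SimpleGraph

theorem stmt_16 {V : Type*} [Fintype V] (G : SimpleGraph V) (hG : G.Connected) :
    ((connSets G).card : ℝ) ≥ Fintype.card V * (Fintype.card V + 1) / 2 := by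
  have huniv : (G.induce ((univ : Finset V) : Set V)).Preconnected := by
    rw [coe_univ]
    exact G.induceUnivIso.preconnected_iff.2 hG.preconnected
  have h := SimpleGraph.card_mul_succ_le_two_mul_card_connSets_subset univ huniv
  simp only [subset_univ, filter_true, card_univ] at h
  have h' : (Fintype.card V * (Fintype.card V + 1) : ℝ) ≤ 2 * #(connSets G) := by exact_mod_cast h
  linarith
end
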